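/- (Proposition 2, two-qubit case) Let p, q be unit vectors in EuclideanSpace ℝ (Fin 3), let σ = (ρ_p ⊗ ρ_q + ρ_q ⊗ ρ_p)/2, and let S be the 4×4 swap matrix S = !![1,0,0,0; 0,0,1,0; 0,1,0,0; 0,0,0,1]. Then S * σ = σ if and only if p = q. That is, the symmetrization of two pure qubit states lies in the symmetric subspace if and only if the two polarization vectors coincide. -/

import Mathlib

open Matrix

/-- The Bloch matrix `ρ_p = (1/2)(I + p₁σx + p₂σy + p₃σz)` of a vector `p ∈ ℝ³`. -/
noncomputable def blochMat (p : EuclideanSpace ℝ (Fin 3)) : Matrix (Fin 2) (Fin 2) ℂ :=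
  (1 / 2 : ℂ) • ((1 : Matrix (Fin 2) (Fin 2) ℂ)
    + (p 0 : ℂ) • !![0, 1; 1, 0]
    + (p 1 : ℂ) • !![0, -Complex.I; Complex.I, 0]
    + (p 2 : ℂ) • !![1, 0; 0, -1])

/-- Enumeration of the two-qubit computational basis in the order (00, 01, 10, 11). -/
def idx : Fin 4 → Fin 2 × Fin 2 := ![(0, 0), (0, 1), (1, 0), (1, 1)]

/-- The Kronecker product of two 2×2 matrices, as a 4×4 matrix with row/column indices
ordered (00, 01, 10, 11). -/
def kron4 (A B : Matrix (Fin 2) (Fin 2) ℂ) : Matrix (Fin 4) (Fin 4) ℂ :=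
  Matrix.of fun i j => A (idx i).1 (idx j).1 * B (idx i).2 (idx j).2

/-!
Taking traces in `S σ = σ` and using the swap trick `tr (S (A ⊗ B)) = tr (A B)` gives
`(1 + ⟪p, q⟫) / 2 = 1`, and unit vectors with inner product `1` coincide. Conversely,
`det ρ_p = (1 - ‖p‖²) / 4`, so a pure `ρ_p` has rank one, and the tensor square of a rank-one
matrix `v wᵀ` is `(v ⊗ v)(w ⊗ w)ᵀ`, which the swap fixes.
-/

def swap4 : Matrix (Fin 4) (Fin 4) ℂ := !![1, 0, 0, 0; 0, 0, 1, 0; 0, 1, 0, 0; 0, 0, 0, 1]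

theorem trace_kron4 (A B : Matrix (Fin 2) (Fin 2) ℂ) :
    (kron4 A B).trace = A.trace * B.trace := by
  simp [trace, kron4, idx, Fin.sum_univ_four, Fin.sum_univ_two, diag]
  ring

theorem trace_swap4_mul_kron4 (A B : Matrix (Fin 2) (Fin 2) ℂ) :
    (swap4 * kron4 A B).trace = (A * B).trace := by
  simp only [trace, diag, mul_apply, Fin.sum_univ_four, Fin.sum_univ_two]
  simp [swap4, kron4, idx]
  ring

theorem swap4_mul_kron4_self_of_det_eq_zero (A : Matrix (Fin 2) (Fin 2) ℂ) (hA : A.det = 0) :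
    swap4 * kron4 A A = kron4 A A := by
  rw [det_fin_two] at hA
  ext i j
  fin_cases i <;> fin_cases j <;>
    simp [swap4, kron4, idx, mul_apply, Fin.sum_univ_four] <;> grind

theorem trace_blochMat (p : EuclideanSpace ℝ (Fin 3)) : (blochMat p).trace = 1 := by
  simp [blochMat, trace, Fin.sum_univ_two]
  ring

theorem trace_blochMat_mul (p q : EuclideanSpace ℝ (Fin 3)) :
    (blochMat p * blochMat q).trace = (1 + (inner ℝ p q : ℂ)) / 2 := by
  simp [blochMat, trace, mul_apply, Fin.sum_univ_two, PiLp.inner_apply, Fin.sum_univ_three]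
  ring_nf
  simp [Complex.I_sq]
  ring

theorem det_blochMat (p : EuclideanSpace ℝ (Fin 3)) :
    (blochMat p).det = (1 - (‖p‖ ^ 2 : ℝ)) / 4 := by
  simp [blochMat, det_fin_two, EuclideanSpace.norm_sq_eq, Fin.sum_univ_three]
  ring_nf
  simp [Complex.I_sq]
  ring

/-- (Proposition 2, two-qubit case.) For unit vectors `p, q ∈ ℝ³`, the symmetrization
`σ = (ρ_p ⊗ ρ_q + ρ_q ⊗ ρ_p)/2` lies in the symmetric subspace, i.e. `S σ = σ` for the
swap matrix `S`, if and only if `p = q`. -/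
theorem symmetrization_in_symmetric_subspace_iff (p q : EuclideanSpace ℝ (Fin 3))
    (hp : ‖p‖ = 1) (hq : ‖q‖ = 1) :
    (!![1, 0, 0, 0; 0, 0, 1, 0; 0, 1, 0, 0; 0, 0, 0, 1] : Matrix (Fin 4) (Fin 4) ℂ) *
          ((1 / 2 : ℂ) • (kron4 (blochMat p) (blochMat q) + kron4 (blochMat q) (blochMat p)))
        = (1 / 2 : ℂ) • (kron4 (blochMat p) (blochMat q) + kron4 (blochMat q) (blochMat p))
      ↔ p = q := by
  change swap4 * _ = _ ↔ _
  constructor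
  · intro h
    have htrace := congrArg Matrix.trace h
    simp only [Matrix.mul_smul, Matrix.mul_add, trace_smul, trace_add, trace_swap4_mul_kron4,
      trace_kron4, trace_blochMat, trace_blochMat_mul, real_inner_comm p q] at htrace
    have hinner : ((inner ℝ p q : ℝ) : ℂ) = 1 := by linear_combination 2 * htrace
    exact (inner_eq_one_iff_of_norm_eq_one hp hq).mp (mod_cast hinner)
  · rintro rfl
    have hdet : (blochMat p).det = 0 := by simp [det_blochMat, hp]
    rw [← two_smul ℂ, smul_smul]
    norm_num [swap4_mul_kron4_self_of_det_eq_zero _ hdet]
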